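/- Let N ≥ 1, let θ_1,…,θ_N, φ_1,…,φ_N ∈ ℝ, let A = ⊗_{l=1}^N A(θ_l, φ_l) and B = σ_Z^{⊗N}. If there exists exactly one bit string m ∈ {0,1}^N with m_1 = 0 such that sin((Σ_{l=1}^N (−1)^{m_l} θ_l)/2) = 0, then the common +1 eigenspace of A and B (the set of ψ with Aψ = ψ and Bψ = ψ) is one-dimensional, and it is spanned by an N-GHZ state. -/

import Mathlib

open Matrix Finset

/-- Tensor product of `N` 2×2 complex matrices, indexed by bit strings. -/
noncomputable def tensorN {N : ℕ} (M : Fin N → Matrix (Fin 2) (Fin 2) ℂ) :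
    Matrix (Fin N → Fin 2) (Fin N → Fin 2) ℂ :=
  fun i j => ∏ l, M l (i l) (j l)

/-- The spin observable `A(θ,φ)`. -/
noncomputable def spinA (θ φ : ℝ) : Matrix (Fin 2) (Fin 2) ℂ :=
  !![(Real.cos θ : ℂ), Complex.exp (-(φ : ℂ) * Complex.I) * (Real.sin θ : ℂ);
     Complex.exp ((φ : ℂ) * Complex.I) * (Real.sin θ : ℂ), -(Real.cos θ : ℂ)]

/-- The Pauli matrix `σ_Z`. -/
def sigmaZ : Matrix (Fin 2) (Fin 2) ℂ := !![1, 0; 0, -1]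

/-- The standard GHZ state `(|0…0⟩ + |1…1⟩)/√2` in `ℂ^{2^N}`. -/
noncomputable def ghzN (N : ℕ) : (Fin N → Fin 2) → ℂ :=
  (Real.sqrt 2 : ℂ)⁻¹ • (Pi.single (fun _ => 0) 1 + Pi.single (fun _ => 1) 1)

/-- A state is an `N`-GHZ state if it is a local-unitary image of `ghzN N`. -/
def IsGHZ {N : ℕ} (ψ : (Fin N → Fin 2) → ℂ) : Prop :=
  ∃ U : Fin N → Matrix (Fin 2) (Fin 2) ℂ,
    (∀ l, U l ∈ Matrix.unitaryGroup (Fin 2) ℂ) ∧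
    ψ = (tensorN U).mulVec (ghzN N)
/-!
Let `S(p) = Σ_l (-1)^{p_l} θ_l`. In the basis of `ℂ²` given by the columns of `adaptedBasis θ φ`,
`A(θ,φ)` acts as `σ_X` and `σ_Z` as `σ_X` twisted by the phases `e^{±iθ}`. So in the product
basis `A` sends `d` to `d ∘ flip` and `B` sends it to `p ↦ e^{iS(p)} d(flip p)`: a common fixed
vector is invariant under complementing all bits and supported where `e^{iS(p)} = 1`, that is
where `sin (S(p)/2) = 0`. As `S` changes sign under complementation, the hypothesis makes this
zero set exactly `{m, m̄}`, so the fixed space is spanned by `|m⟩ + |m̄⟩`, the image of the GHZ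
state under the local unitaries `2^{-1/2} G_l σ_X^{m_l}`.
-/

open Complex

section LocalBasis

def sigmaX : Matrix (Fin 2) (Fin 2) ℂ := !![0, 1; 1, 0]

noncomputable def phasedFlip (θ : ℝ) : Matrix (Fin 2) (Fin 2) ℂ :=
  !![0, exp (θ * I); exp (-θ * I), 0]

/- The columns are chosen so that `A(θ,φ)` swaps them and `σ_Z` swaps them up to the phases
`e^{∓iθ}`. In `u = e^{iθ/2}`, `v = e^{iφ}` all entries are rational, which is how the identities
below are checked. -/
noncomputable def adaptedBasis (θ φ : ℝ) : Matrix (Fin 2) (Fin 2) ℂ :=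
  !![(exp (θ / 2 * I))⁻¹, exp (θ / 2 * I);
     I * exp (φ * I) * (exp (θ / 2 * I))⁻¹, -(I * exp (φ * I) * exp (θ / 2 * I))]

lemma exp_mul_I_eq_sq (x : ℂ) : exp (x * I) = exp (x / 2 * I) ^ 2 := by
  rw [← exp_nat_mul]; ring_nf

lemma exp_neg_mul_I_eq_inv_sq (x : ℂ) : exp (-x * I) = (exp (x / 2 * I))⁻¹ ^ 2 := by
  rw [neg_mul, exp_neg, exp_mul_I_eq_sq, inv_pow]

lemma ofReal_cos_eq_exp_half (θ : ℝ) :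
    (Real.cos θ : ℂ) = (exp (θ / 2 * I) ^ 2 + (exp (θ / 2 * I))⁻¹ ^ 2) / 2 := by
  rw [ofReal_cos, cos, exp_neg_mul_I_eq_inv_sq (θ : ℂ), exp_mul_I_eq_sq (θ : ℂ)]

lemma ofReal_sin_eq_exp_half (θ : ℝ) :
    (Real.sin θ : ℂ) = (exp (θ / 2 * I) ^ 2 - (exp (θ / 2 * I))⁻¹ ^ 2) / (2 * I) := by
  rw [ofReal_sin, sin, exp_neg_mul_I_eq_inv_sq (θ : ℂ), exp_mul_I_eq_sq (θ : ℂ)]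
  field_simp
  grind [I_sq]

lemma conj_exp_mul_I {x : ℂ} (hx : (starRingEnd ℂ) x = x) :
    (starRingEnd ℂ) (exp (x * I)) = (exp (x * I))⁻¹ := by
  rw [← exp_conj, map_mul, hx, conj_I, ← exp_neg, mul_neg]

lemma exp_mul_I_eq_one_iff (x : ℝ) : exp (x * I) = 1 ↔ Real.sin (x / 2) = 0 := by
  rw [Complex.exp_eq_one_iff, Real.sin_eq_zero_iff]
  refine exists_congr fun n => ?_
  rw [← mul_assoc, mul_left_inj' I_ne_zero, eq_div_iff two_ne_zero, ← ofReal_inj]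
  push_cast
  constructor <;> intro h <;> linear_combination -h

lemma spinA_mul_adaptedBasis (θ φ : ℝ) :
    spinA θ φ * adaptedBasis θ φ = adaptedBasis θ φ * sigmaX := by
  rw [spinA, adaptedBasis, ofReal_cos_eq_exp_half, ofReal_sin_eq_exp_half, neg_mul, exp_neg]
  have hu := exp_ne_zero (θ / 2 * I)
  have hv := exp_ne_zero (φ * I)
  generalize exp (θ / 2 * I) = u at *
  generalize exp (φ * I) = v at *
  ext i j
  fin_cases i <;> fin_cases j <;>
  · simp [sigmaX, Matrix.mul_apply, Fin.sum_univ_two]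
    field_simp
    grind [I_sq]

lemma sigmaZ_mul_adaptedBasis (θ φ : ℝ) :
    sigmaZ * adaptedBasis θ φ = adaptedBasis θ φ * phasedFlip θ := by
  rw [phasedFlip, exp_neg_mul_I_eq_inv_sq (θ : ℂ), exp_mul_I_eq_sq (θ : ℂ), adaptedBasis]
  have hu := exp_ne_zero (θ / 2 * I)
  generalize exp (θ / 2 * I) = u at *
  ext i j
  fin_cases i <;> fin_cases j <;>
  · simp [sigmaZ, Matrix.mul_apply, Fin.sum_univ_two]
    field_simp

lemma adaptedBasis_mul_conjTranspose (θ φ : ℝ) :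
    adaptedBasis θ φ * (adaptedBasis θ φ)ᴴ = (2 : ℂ) • 1 := by
  have hu := conj_exp_mul_I (x := θ / 2) (by rw [map_div₀, conj_ofReal, map_ofNat])
  have hv := conj_exp_mul_I (conj_ofReal φ)
  have hu0 := exp_ne_zero (θ / 2 * I)
  have hv0 := exp_ne_zero (φ * I)
  rw [adaptedBasis]
  generalize exp (θ / 2 * I) = u at *
  generalize exp (φ * I) = v at *
  ext i j
  fin_cases i <;> fin_cases j <;>
  · simp [Matrix.mul_apply, Fin.sum_univ_two, hu, hv]
    field_simp
    grind [I_sq]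

lemma inv_sqrt_two_smul_adaptedBasis_mem_unitaryGroup (θ φ : ℝ) :
    (Real.sqrt 2 : ℂ)⁻¹ • adaptedBasis θ φ ∈ unitaryGroup (Fin 2) ℂ := by
  rw [mem_unitaryGroup_iff, star_smul, smul_mul_smul, star_eq_conjTranspose,
    adaptedBasis_mul_conjTranspose, smul_smul, star_inv₀, star_def, conj_ofReal, ← mul_inv,
    ← ofReal_mul, Real.mul_self_sqrt zero_le_two]
  norm_num

lemma sigmaX_mem_unitaryGroup : sigmaX ∈ unitaryGroup (Fin 2) ℂ := by
  rw [mem_unitaryGroup_iff]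
  ext i j
  fin_cases i <;> fin_cases j <;> simp [sigmaX, Matrix.mul_apply, star_eq_conjTranspose]

lemma sigmaX_pow_apply (s a b : Fin 2) :
    (sigmaX ^ (s : ℕ)) a b = if a = b + s then 1 else 0 := by
  fin_cases s <;> fin_cases a <;> fin_cases b <;> simp [sigmaX]

end LocalBasis

section BitStrings

variable {ι : Type*}

def flipBits (p : ι → Fin 2) : ι → Fin 2 := fun l => (p l).rev

@[simp]
lemma flipBits_flipBits (p : ι → Fin 2) : flipBits (flipBits p) = p :=
  funext fun l => Fin.rev_rev (p l)

lemma flipBits_ne [Nonempty ι] (p : ι → Fin 2) : flipBits p ≠ p := by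
  obtain ⟨l⟩ := ‹Nonempty ι›
  intro h
  have hl := congrFun h l
  revert hl
  simp only [flipBits]
  generalize p l = a
  fin_cases a <;> decide

lemma flipBits_eq_iff {p q : ι → Fin 2} : flipBits p = q ↔ p = flipBits q := by
  constructor <;> rintro rfl <;> simp

lemma one_add_eq_flipBits (p : ι → Fin 2) : (fun _ => 1) + p = flipBits p := by
  funext l
  simp only [Pi.add_apply, flipBits]
  generalize p l = a
  fin_cases a <;> rfl

def signedAngleSum [Fintype ι] (θ : ι → ℝ) (p : ι → Fin 2) : ℝ :=
  ∑ l, (-1 : ℝ) ^ (p l : ℕ) * θ l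

lemma signedAngleSum_flipBits [Fintype ι] (θ : ι → ℝ) (p : ι → Fin 2) :
    signedAngleSum θ (flipBits p) = -signedAngleSum θ p := by
  simp only [signedAngleSum, ← Finset.sum_neg_distrib, flipBits]
  refine Finset.sum_congr rfl fun l _ => ?_
  generalize p l = a
  fin_cases a <;> simp

lemma sin_half_signedAngleSum_flipBits [Fintype ι] (θ : ι → ℝ) (p : ι → Fin 2) :
    Real.sin (signedAngleSum θ (flipBits p) / 2) = -Real.sin (signedAngleSum θ p / 2) := by
  rw [signedAngleSum_flipBits, neg_div, Real.sin_neg]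

/- The zero set is closed under complementation, and exactly one of `p`, `flipBits p` vanishes
at `i₀`. -/
lemma sin_half_signedAngleSum_eq_zero_iff [Fintype ι] {θ : ι → ℝ} {i₀ : ι} {m : ι → Fin 2}
    (hm : Real.sin (signedAngleSum θ m / 2) = 0)
    (huniq : ∀ p : ι → Fin 2, p i₀ = 0 ∧ Real.sin (signedAngleSum θ p / 2) = 0 → p = m)
    (p : ι → Fin 2) : Real.sin (signedAngleSum θ p / 2) = 0 ↔ p = m ∨ p = flipBits m := by
  constructor
  · intro hp
    by_cases h0 : p i₀ = 0
    · exact Or.inl (huniq p ⟨h0, hp⟩)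
    · refine Or.inr (flipBits_eq_iff.mp (huniq _ ⟨?_, ?_⟩))
      · simp only [flipBits]
        revert h0
        generalize p i₀ = a
        fin_cases a <;> decide
      · rw [sin_half_signedAngleSum_flipBits, hp, neg_zero]
  · rintro (rfl | rfl)
    · exact hm
    · rw [sin_half_signedAngleSum_flipBits, hm, neg_zero]

end BitStrings

section Tensor

variable {N : ℕ}

lemma tensorN_mul (M P : Fin N → Matrix (Fin 2) (Fin 2) ℂ) :
    tensorN (fun l => M l * P l) = tensorN M * tensorN P := by
  ext i j
  simp only [tensorN, Matrix.mul_apply, Finset.prod_univ_sum, Fintype.piFinset_univ,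
    Finset.prod_mul_distrib]

lemma tensorN_one : tensorN (fun _ : Fin N => (1 : Matrix (Fin 2) (Fin 2) ℂ)) = 1 := by
  ext i j
  simp only [tensorN, Matrix.one_apply, Fintype.prod_boole, funext_iff]
  congr

lemma tensorN_smul (c : ℂ) (M : Fin N → Matrix (Fin 2) (Fin 2) ℂ) :
    tensorN (fun l => c • M l) = c ^ N • tensorN M := by
  ext i j
  simp [tensorN, Finset.prod_mul_distrib]

lemma tensorN_antidiagonal_mulVec (c : Fin N → Fin 2 → ℂ) (d : (Fin N → Fin 2) → ℂ) :
    (tensorN fun l => !![0, c l 0; c l 1, 0]) *ᵥ d =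
      fun p => (∏ l, c l (p l)) * d (flipBits p) := by
  have entry : ∀ l a b, !![0, c l 0; c l 1, 0] a b = if b = a.rev then c l a else 0 := by
    intro l a b
    fin_cases a <;> fin_cases b <;> simp
  funext p
  have hflip : ∀ q : Fin N → Fin 2, (∀ l, q l = (p l).rev) ↔ q = flipBits p :=
    fun _ => funext_iff.symm
  simp only [mulVec, dotProduct, tensorN, entry, Fintype.prod_ite_zero, ite_mul, zero_mul, hflip,
    Finset.sum_ite_eq', Finset.mem_univ, if_true]

lemma tensorN_sigmaX_mulVec (d : (Fin N → Fin 2) → ℂ) :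
    (tensorN fun _ => sigmaX) *ᵥ d = d ∘ flipBits := by
  have h := tensorN_antidiagonal_mulVec (fun _ _ => 1) d
  simp only [Finset.prod_const_one, one_mul] at h
  exact h

lemma tensorN_phasedFlip_mulVec (θ : Fin N → ℝ) (d : (Fin N → Fin 2) → ℂ) :
    (tensorN fun l => phasedFlip (θ l)) *ᵥ d =
      fun p => exp (signedAngleSum θ p * I) * d (flipBits p) := by
  have h := tensorN_antidiagonal_mulVec (fun l a => exp (((-1 : ℝ) ^ (a : ℕ) * θ l : ℝ) * I)) d
  simp only [signedAngleSum, ofReal_sum, Finset.sum_mul, exp_sum]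
  convert h using 3
  funext l
  ext a b
  fin_cases a <;> fin_cases b <;> simp [phasedFlip]

lemma tensorN_sigmaX_pow_mulVec_single (m q : Fin N → Fin 2) :
    (tensorN fun l => sigmaX ^ (m l : ℕ)) *ᵥ Pi.single q 1 = Pi.single (q + m) 1 := by
  funext p
  simp only [mulVec_single_one, col_apply, tensorN, sigmaX_pow_apply, Fintype.prod_boole,
    Pi.single_apply, funext_iff, Pi.add_apply]
  congr

lemma tensorN_mul_eq_mul {A G A' : Fin N → Matrix (Fin 2) (Fin 2) ℂ}
    (h : ∀ l, A l * G l = G l * A' l) : tensorN A * tensorN G = tensorN G * tensorN A' := by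
  rw [← tensorN_mul, ← tensorN_mul, funext h]

lemma tensorN_mul_eq_one {M P : Fin N → Matrix (Fin 2) (Fin 2) ℂ} (h : ∀ l, M l * P l = 1) :
    tensorN M * tensorN P = 1 := by
  rw [← tensorN_mul, funext h, tensorN_one]

end Tensor

section CommonFixedSet

variable {n R : Type*} [Fintype n] [CommRing R]

lemma image_mulVec_span_singleton (G : Matrix n n R) (v : n → R) :
    G.mulVec '' Submodule.span R {v} = Submodule.span R {G *ᵥ v} := by
  calc G.mulVec '' Submodule.span R {v} = Submodule.map G.mulVecLin (Submodule.span R {v}) :=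
        (Submodule.map_coe G.mulVecLin _).symm
    _ = Submodule.span R {G *ᵥ v} := by
      rw [Submodule.map_span, Set.image_singleton, mulVecLin_apply]

variable [DecidableEq n]

def commonFixedSet (A B : Matrix n n R) : Set (n → R) := {χ | A *ᵥ χ = χ ∧ B *ᵥ χ = χ}

lemma commonFixedSet_eq_image {A B A' B' G H : Matrix n n R} (hGH : G * H = 1)
    (hA : A * G = G * A') (hB : B * G = G * B') :
    commonFixedSet A B = G.mulVec '' commonFixedSet A' B' := by
  have hinj : Function.Injective G.mulVec := fun u v huv => by
    simpa [mulVec_mulVec, mul_eq_one_comm.mp hGH] using congrArg (H *ᵥ ·) huv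
  have fixed_iff : ∀ {M M' : Matrix n n R}, M * G = G * M' → ∀ d,
      M *ᵥ (G *ᵥ d) = G *ᵥ d ↔ M' *ᵥ d = d := fun hM d => by
    rw [mulVec_mulVec, hM, ← mulVec_mulVec, hinj.eq_iff]
  ext χ
  constructor
  · intro hχ
    have hGHχ : G *ᵥ (H *ᵥ χ) = χ := by rw [mulVec_mulVec, hGH, one_mulVec]
    change A *ᵥ χ = χ ∧ B *ᵥ χ = χ at hχ
    rw [← hGHχ, fixed_iff hA, fixed_iff hB] at hχ
    exact ⟨H *ᵥ χ, hχ, hGHχ⟩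
  · rintro ⟨d, ⟨hAd, hBd⟩, rfl⟩
    exact ⟨(fixed_iff hA d).mpr hAd, (fixed_iff hB d).mpr hBd⟩

end CommonFixedSet

section PairVec

variable {ι : Type*} [Fintype ι]

noncomputable def pairVec (m : ι → Fin 2) : (ι → Fin 2) → ℂ :=
  Pi.single m 1 + Pi.single (flipBits m) 1

lemma pairVec_apply (m p : ι → Fin 2) :
    pairVec m p = (if p = m then 1 else 0) + if p = flipBits m then 1 else 0 := by
  simp [pairVec, Pi.single_apply]

lemma pairVec_flipBits (m p : ι → Fin 2) : pairVec m (flipBits p) = pairVec m p := by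
  simp only [pairVec_apply, flipBits_eq_iff, flipBits_flipBits]
  exact add_comm _ _

lemma mem_span_pairVec_iff [Nonempty ι] {m : ι → Fin 2} {d : (ι → Fin 2) → ℂ} :
    d ∈ Submodule.span ℂ {pairVec m} ↔
      (∀ p, d (flipBits p) = d p) ∧ ∀ p, d p ≠ 0 → p = m ∨ p = flipBits m := by
  rw [Submodule.mem_span_singleton]
  constructor
  · rintro ⟨a, rfl⟩
    refine ⟨fun p => by simp only [Pi.smul_apply, pairVec_flipBits], fun p hp => ?_⟩
    by_contra hpm
    rw [not_or] at hpm
    simp [pairVec_apply, hpm.1, hpm.2] at hp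
  · rintro ⟨hsymm, hsupp⟩
    refine ⟨d m, funext fun p => ?_⟩
    have hne := flipBits_ne m
    by_cases hp : p = m
    · simp [hp, pairVec_apply, hne.symm]
    by_cases hp' : p = flipBits m
    · simp [hp', pairVec_apply, hne, hsymm]
    have : d p = 0 := by by_contra h; exact (hsupp p h).elim hp hp'
    simp [pairVec_apply, hp, hp', this]

end PairVec

section AdaptedCoordinates

variable {N : ℕ}

lemma mem_commonFixedSet_sigmaX_phasedFlip_iff (θ : Fin N → ℝ) (d : (Fin N → Fin 2) → ℂ) :
    d ∈ commonFixedSet (tensorN fun _ => sigmaX) (tensorN fun l => phasedFlip (θ l)) ↔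
      (∀ p, d (flipBits p) = d p) ∧
        ∀ p, d p ≠ 0 → Real.sin (signedAngleSum θ p / 2) = 0 := by
  change _ ∧ _ ↔ _
  rw [tensorN_sigmaX_mulVec, tensorN_phasedFlip_mulVec, funext_iff, funext_iff]
  refine and_congr_right fun hsymm => forall_congr' fun p => ?_
  simp only [Function.comp_apply] at hsymm
  rw [hsymm, ← exp_mul_I_eq_one_iff, mul_left_eq_self₀]
  tauto

lemma commonFixedSet_sigmaX_phasedFlip [NeZero N] {θ : Fin N → ℝ} {m : Fin N → Fin 2}
    (hzero : ∀ p, Real.sin (signedAngleSum θ p / 2) = 0 ↔ p = m ∨ p = flipBits m) :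
    commonFixedSet (tensorN fun _ => sigmaX) (tensorN fun l => phasedFlip (θ l)) =
      Submodule.span ℂ {pairVec m} := by
  ext d
  simp only [mem_commonFixedSet_sigmaX_phasedFlip_iff, hzero, SetLike.mem_coe,
    mem_span_pairVec_iff]

lemma tensorN_mulVec_ghzN (M : Fin N → Matrix (Fin 2) (Fin 2) ℂ) (m : Fin N → Fin 2) :
    (tensorN fun l => (Real.sqrt 2 : ℂ)⁻¹ • M l * sigmaX ^ (m l : ℕ)) *ᵥ ghzN N =
      (Real.sqrt 2 : ℂ)⁻¹ ^ (N + 1) • (tensorN M *ᵥ pairVec m) := by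
  have hzero : (fun _ => (0 : Fin 2)) + m = m := zero_add m
  rw [tensorN_mul, tensorN_smul, smul_mul_assoc, ghzN, mulVec_smul, smul_mulVec, ← mulVec_mulVec,
    mulVec_add, tensorN_sigmaX_pow_mulVec_single, tensorN_sigmaX_pow_mulVec_single, hzero,
    one_add_eq_flipBits, smul_smul, ← pow_succ']
  rfl

end AdaptedCoordinates

theorem stmt1 (N : ℕ) (hN : 1 ≤ N) (θ φ : Fin N → ℝ)
    (h : ∃! m : Fin N → Fin 2, m ⟨0, hN⟩ = 0 ∧
      Real.sin ((∑ l, (-1 : ℝ) ^ (m l : ℕ) * θ l) / 2) = 0) :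
    ∃ ψ : (Fin N → Fin 2) → ℂ, IsGHZ ψ ∧
      {χ : (Fin N → Fin 2) → ℂ |
          (tensorN (fun l => spinA (θ l) (φ l))).mulVec χ = χ ∧
          (tensorN (fun _ => sigmaZ)).mulVec χ = χ}
        = ↑(Submodule.span ℂ {ψ}) := by
  obtain ⟨m, ⟨-, hm⟩, huniq⟩ := h
  have : NeZero N := ⟨by omega⟩
  set G := tensorN fun l => adaptedBasis (θ l) (φ l)
  have hGH : G * tensorN (fun l => (2 : ℂ)⁻¹ • (adaptedBasis (θ l) (φ l))ᴴ) = 1 :=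
    tensorN_mul_eq_one fun l => by
      rw [mul_smul_comm, adaptedBasis_mul_conjTranspose, smul_smul, inv_mul_cancel₀ two_ne_zero,
        one_smul]
  have hA := tensorN_mul_eq_mul fun l => spinA_mul_adaptedBasis (θ l) (φ l)
  have hB := tensorN_mul_eq_mul fun l => sigmaZ_mul_adaptedBasis (θ l) (φ l)
  refine ⟨_, ⟨_, fun l => mul_mem (inv_sqrt_two_smul_adaptedBasis_mem_unitaryGroup (θ l) (φ l))
    (pow_mem sigmaX_mem_unitaryGroup (m l : ℕ)), rfl⟩, ?_⟩
  change commonFixedSet _ _ = _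
  rw [commonFixedSet_eq_image hGH hA hB,
    commonFixedSet_sigmaX_phasedFlip (sin_half_signedAngleSum_eq_zero_iff hm huniq),
    tensorN_mulVec_ghzN, Submodule.span_singleton_smul_eq]
  · exact image_mulVec_span_singleton G (pairVec m)
  · simp
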